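/- Assume consistency, ignorability, and the treatment-conditional measurement error model, and assume additionally that X and T are independent (randomized treatment assignment) with 0 < P(T = 1) < 1. Then for every t ∈ {0,1}, every loss ℓ : [0,1] × {0,1} → ℝ and every predictor f : 𝒳 → [0,1], the unweighted surrogate risk over the treated population equals the risk over target potential outcomes: E[ℓ̃(f(X), Y) | T = t] = E[ℓ(f(X), Y*_t)]. -/
import Mathlib

open scoped Classical
open Finset

/-- Probability of an event under a probability mass function `P` on a finite sample space. -/
noncomputable def pr {Ω : Type*} [Fintype Ω] (P : Ω → ℝ) (A : Set Ω) : ℝ :=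
  ∑ ω : Ω, if ω ∈ A then P ω else 0

/-- Conditional probability `P(A | B) = P(A ∩ B) / P(B)`. -/
noncomputable def cpr {Ω : Type*} [Fintype Ω] (P : Ω → ℝ) (A B : Set Ω) : ℝ :=
  pr P (A ∩ B) / pr P B

/-- Expectation of a real random variable. -/
noncomputable def ex {Ω : Type*} [Fintype Ω] (P : Ω → ℝ) (Z : Ω → ℝ) : ℝ :=
  ∑ ω : Ω, P ω * Z ω

/-- Conditional expectation `E[Z | B]`. -/
noncomputable def cex {Ω : Type*} [Fintype Ω] (P : Ω → ℝ) (Z : Ω → ℝ) (B : Set Ω) : ℝ :=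
  (∑ ω : Ω, if ω ∈ B then P ω * Z ω else 0) / pr P B

/-- The surrogate loss `ℓ̃` built from loss `ℓ` and error parameters `α` (FPR) and `β` (FNR). -/
noncomputable def surrogateLoss (α β : ℝ) (ℓ : Set.Icc (0:ℝ) 1 → Fin 2 → ℝ)
    (z : Set.Icc (0:ℝ) 1) (y : Fin 2) : ℝ :=
  if y = 1 then ((1 - α) * ℓ z 1 - β * ℓ z 0) / (1 - β - α)
  else ((1 - β) * ℓ z 0 - α * ℓ z 1) / (1 - β - α)

section aux
variable {Ω : Type*} [Fintype Ω] {P : Ω → ℝ}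

lemma pr_congr {A B : Set Ω} (P : Ω → ℝ) (h : ∀ ω, ω ∈ A ↔ ω ∈ B) : pr P A = pr P B := by
  unfold pr; exact Finset.sum_congr rfl fun ω _ => by rw [if_congr (h ω) rfl rfl]

lemma pr_nonneg (hP0 : ∀ ω, 0 ≤ P ω) (A : Set Ω) : 0 ≤ pr P A := by
  refine Finset.sum_nonneg fun ω _ => ?_
  split <;> simp [hP0 ω]

lemma pr_mono (hP0 : ∀ ω, 0 ≤ P ω) {A B : Set Ω} (h : A ⊆ B) : pr P A ≤ pr P B := by
  refine Finset.sum_le_sum fun ω _ => ?_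
  by_cases hω : ω ∈ A
  · simp [hω, h hω]
  · simp only [hω, if_false]
    split <;> simp [hP0 ω]

lemma pr_eq_zero (hP0 : ∀ ω, 0 ≤ P ω) {A B : Set Ω} (h : A ⊆ B) (hB : pr P B = 0) :
    pr P A = 0 :=
  le_antisymm (hB ▸ pr_mono hP0 h) (pr_nonneg hP0 A)

lemma sum_fiber {V : Type*} [Fintype V] (P : Ω → ℝ) (g : Ω → V)
    (h : V → ℝ) (A : Set Ω) :
    ∑ v : V, h v * pr P {ω | g ω = v ∧ ω ∈ A}
      = ∑ ω : Ω, if ω ∈ A then P ω * h (g ω) else 0 := by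
  unfold pr
  simp_rw [Finset.mul_sum]
  rw [Finset.sum_comm]
  refine Finset.sum_congr rfl fun ω _ => ?_
  rw [Finset.sum_eq_single (g ω)]
  · by_cases hA : ω ∈ A <;> simp [Set.mem_setOf_eq, hA, mul_comm]
  · intro v _ hv
    simp [Set.mem_setOf_eq, Ne.symm hv]
  · simp

lemma pr_fiber {V : Type*} [Fintype V] (P : Ω → ℝ) (g : Ω → V) (A : Set Ω) :
    pr P A = ∑ v : V, pr P {ω | g ω = v ∧ ω ∈ A} := by
  have := sum_fiber P g (fun _ => 1) A
  simp only [one_mul, mul_one] at this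
  rw [this]; rfl

/-- The (unnormalized) conditional expectation numerator. -/
noncomputable def exIf {Ω : Type*} [Fintype Ω] (P : Ω → ℝ) (Z : Ω → ℝ) (B : Set Ω) : ℝ :=
  ∑ ω : Ω, if ω ∈ B then P ω * Z ω else 0

end aux

/-- Under consistency, ignorability, the treatment-conditional measurement
error model, and randomized treatment assignment (`X ⟂ T`, `0 < P(T = 1) < 1`), the unweighted
surrogate risk over the treated population equals the risk over target potential outcomes:
`E[ℓ̃(f(X), Y) | T = t] = E[ℓ(f(X), Y*_t)]`. -/
theorem surrogate_risk_unbiased_under_randomization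
    {Ω 𝒳 : Type*} [Fintype Ω] [Fintype 𝒳] [Nonempty 𝒳]
    (P : Ω → ℝ) (hP0 : ∀ ω, 0 ≤ P ω) (hP1 : ∑ ω : Ω, P ω = 1)
    (X : Ω → 𝒳) (T : Ω → Fin 2)
    -- target potential outcomes `Ys t` and proxy potential outcomes `Yp t`, `t ∈ {0,1}`
    (Ys Yp : Fin 2 → Ω → Fin 2)
    -- consistency: the observed proxy outcome
    (Y : Ω → Fin 2) (hcons : ∀ ω, Y ω = Yp (T ω) ω)
    -- ignorability: `(Y*₀, Y*₁, Y₀, Y₁) ⟂ T | X = x`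
    (hig : ∀ x : 𝒳, 0 < pr P {ω | X ω = x} →
      ∀ a b c d t : Fin 2,
        cpr P ({ω | Ys 0 ω = a ∧ Ys 1 ω = b ∧ Yp 0 ω = c ∧ Yp 1 ω = d} ∩ {ω | T ω = t})
            {ω | X ω = x}
          = cpr P {ω | Ys 0 ω = a ∧ Ys 1 ω = b ∧ Yp 0 ω = c ∧ Yp 1 ω = d} {ω | X ω = x}
            * cpr P {ω | T ω = t} {ω | X ω = x})
    -- treatment-conditional measurement error model
    (α β : Fin 2 → ℝ)
    (hα : ∀ t, α t ∈ Set.Ico (0:ℝ) 1) (hβ : ∀ t, β t ∈ Set.Ico (0:ℝ) 1)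
    (hαβ : ∀ t, α t + β t < 1)
    (hme : ∀ (t : Fin 2) (x : 𝒳), 0 < pr P {ω | X ω = x} →
      (0 < pr P {ω | Ys t ω = 0 ∧ X ω = x} →
        cpr P {ω | Yp t ω = 1} {ω | Ys t ω = 0 ∧ X ω = x} = α t) ∧
      (0 < pr P {ω | Ys t ω = 1 ∧ X ω = x} →
        cpr P {ω | Yp t ω = 0} {ω | Ys t ω = 1 ∧ X ω = x} = β t))
    -- randomized treatment assignment: `X ⟂ T` and `0 < P(T = 1) < 1`
    (hind : ∀ (x : 𝒳) (s : Fin 2),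
      pr P {ω | X ω = x ∧ T ω = s} = pr P {ω | X ω = x} * pr P {ω | T ω = s})
    (hT : 0 < pr P {ω | T ω = 1} ∧ pr P {ω | T ω = 1} < 1)
    (t : Fin 2) (ℓ : Set.Icc (0:ℝ) 1 → Fin 2 → ℝ) (f : 𝒳 → Set.Icc (0:ℝ) 1) :
    cex P (fun ω => surrogateLoss (α t) (β t) ℓ (f (X ω)) (Y ω)) {ω | T ω = t}
      = ex P (fun ω => ℓ (f (X ω)) (Ys t ω)) := by
  obtain ⟨hT1, hT1'⟩ := hT
  have hfin2 : ∀ s : Fin 2, s = 0 ∨ s = 1 := by decide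
  -- P(T=0) + P(T=1) = 1
  have hTsum : pr P {ω | T ω = 0} + pr P {ω | T ω = 1} = 1 := by
    unfold pr
    rw [← Finset.sum_add_distrib, ← hP1]
    refine Finset.sum_congr rfl fun ω _ => ?_
    rcases hfin2 (T ω) with h | h <;> simp [Set.mem_setOf_eq, h]
  have hTt : 0 < pr P {ω | T ω = t} := by
    rcases hfin2 t with rfl | rfl
    · linarith
    · exact hT1
  have hTtne : pr P {ω | T ω = t} ≠ 0 := ne_of_gt hTt
  -- selector for the t-th proxy coordinate of the joint vector
  set sel : Fin 2 × Fin 2 × Fin 2 × Fin 2 → Fin 2 :=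
    fun w => if t = 0 then w.2.2.1 else w.2.2.2 with hsel_def
  have hsel : ∀ ω, sel (Ys 0 ω, Ys 1 ω, Yp 0 ω, Yp 1 ω) = Yp t ω := by
    intro ω
    rcases hfin2 t with rfl | rfl <;> simp [hsel_def]
  -- pointwise conditional-independence identity, per joint value w
  have hig' : ∀ (x : 𝒳) (w : Fin 2 × Fin 2 × Fin 2 × Fin 2),
      pr P {ω | (Ys 0 ω, Ys 1 ω, Yp 0 ω, Yp 1 ω) = w ∧ X ω = x ∧ T ω = t}
        = pr P {ω | (Ys 0 ω, Ys 1 ω, Yp 0 ω, Yp 1 ω) = w ∧ X ω = x}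
            * pr P {ω | T ω = t} := by
    intro x w
    by_cases hx : pr P {ω | X ω = x} = 0
    · rw [pr_eq_zero hP0 (fun ω h => h.2.1 : _ ⊆ {ω | X ω = x}) hx,
        pr_eq_zero hP0 (fun ω h => h.2 : _ ⊆ {ω | X ω = x}) hx, zero_mul]
    · have hx' : 0 < pr P {ω | X ω = x} := lt_of_le_of_ne (pr_nonneg hP0 _) (Ne.symm hx)
      have key := hig x hx' w.1 w.2.1 w.2.2.1 w.2.2.2 t
      have hTX : pr P ({ω | T ω = t} ∩ {ω | X ω = x})
          = pr P {ω | X ω = x} * pr P {ω | T ω = t} := by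
        rw [← hind x t]
        exact pr_congr P fun ω => by simp [Set.mem_setOf_eq, and_comm]
      unfold cpr at key
      rw [hTX] at key
      have key2 : pr P (({ω | Ys 0 ω = w.1 ∧ Ys 1 ω = w.2.1 ∧ Yp 0 ω = w.2.2.1
            ∧ Yp 1 ω = w.2.2.2} ∩ {ω | T ω = t}) ∩ {ω | X ω = x})
          = pr P ({ω | Ys 0 ω = w.1 ∧ Ys 1 ω = w.2.1 ∧ Yp 0 ω = w.2.2.1
            ∧ Yp 1 ω = w.2.2.2} ∩ {ω | X ω = x}) * pr P {ω | T ω = t} := by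
        field_simp at key
        linarith
      calc pr P {ω | (Ys 0 ω, Ys 1 ω, Yp 0 ω, Yp 1 ω) = w ∧ X ω = x ∧ T ω = t}
          = pr P (({ω | Ys 0 ω = w.1 ∧ Ys 1 ω = w.2.1 ∧ Yp 0 ω = w.2.2.1 ∧ Yp 1 ω = w.2.2.2}
              ∩ {ω | T ω = t}) ∩ {ω | X ω = x}) := by
            refine pr_congr P fun ω => ?_
            simp only [Set.mem_setOf_eq, Set.mem_inter_iff, Prod.ext_iff]
            tauto
        _ = pr P ({ω | Ys 0 ω = w.1 ∧ Ys 1 ω = w.2.1 ∧ Yp 0 ω = w.2.2.1 ∧ Yp 1 ω = w.2.2.2}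
              ∩ {ω | X ω = x}) * pr P {ω | T ω = t} := key2
        _ = pr P {ω | (Ys 0 ω, Ys 1 ω, Yp 0 ω, Yp 1 ω) = w ∧ X ω = x}
              * pr P {ω | T ω = t} := by
            congr 1
            refine pr_congr P fun ω => ?_
            simp only [Set.mem_setOf_eq, Set.mem_inter_iff, Prod.ext_iff]
  -- conditional independence of (Yp t) from T given X (unconditional form)
  have hA : ∀ (x : 𝒳) (y : Fin 2),
      pr P {ω | Yp t ω = y ∧ X ω = x ∧ T ω = t}
        = pr P {ω | Yp t ω = y ∧ X ω = x} * pr P {ω | T ω = t} := by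
    intro x y
    rw [pr_fiber P (fun ω => (Ys 0 ω, Ys 1 ω, Yp 0 ω, Yp 1 ω))
        {ω | Yp t ω = y ∧ X ω = x ∧ T ω = t},
      pr_fiber P (fun ω => (Ys 0 ω, Ys 1 ω, Yp 0 ω, Yp 1 ω)) {ω | Yp t ω = y ∧ X ω = x},
      Finset.sum_mul]
    refine Finset.sum_congr rfl fun w _ => ?_
    by_cases hw : sel w = y
    · calc pr P {ω | (Ys 0 ω, Ys 1 ω, Yp 0 ω, Yp 1 ω) = w
            ∧ ω ∈ {ω | Yp t ω = y ∧ X ω = x ∧ T ω = t}}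
          = pr P {ω | (Ys 0 ω, Ys 1 ω, Yp 0 ω, Yp 1 ω) = w ∧ X ω = x ∧ T ω = t} := by
            refine pr_congr P fun ω => ?_
            simp only [Set.mem_setOf_eq]
            constructor
            · rintro ⟨h1, _, h3, h4⟩; exact ⟨h1, h3, h4⟩
            · rintro ⟨h1, h3, h4⟩
              exact ⟨h1, by rw [← hsel ω, h1, hw], h3, h4⟩
        _ = pr P {ω | (Ys 0 ω, Ys 1 ω, Yp 0 ω, Yp 1 ω) = w ∧ X ω = x}
              * pr P {ω | T ω = t} := hig' x w
        _ = pr P {ω | (Ys 0 ω, Ys 1 ω, Yp 0 ω, Yp 1 ω) = w ∧ ω ∈ {ω | Yp t ω = y ∧ X ω = x}}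
              * pr P {ω | T ω = t} := by
            congr 1
            refine pr_congr P fun ω => ?_
            simp only [Set.mem_setOf_eq]
            constructor
            · rintro ⟨h1, h3⟩
              exact ⟨h1, by rw [← hsel ω, h1, hw], h3⟩
            · rintro ⟨h1, _, h3⟩; exact ⟨h1, h3⟩
    · have e1 : pr P {ω | (Ys 0 ω, Ys 1 ω, Yp 0 ω, Yp 1 ω) = w
          ∧ ω ∈ {ω | Yp t ω = y ∧ X ω = x ∧ T ω = t}} = 0 := by
        refine pr_eq_zero hP0 (fun ω h => ?_ : _ ⊆ (∅ : Set Ω)) (by simp [pr])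
        exact absurd (by rw [← h.2.1, ← hsel ω, h.1]) hw
      have e2 : pr P {ω | (Ys 0 ω, Ys 1 ω, Yp 0 ω, Yp 1 ω) = w
          ∧ ω ∈ {ω | Yp t ω = y ∧ X ω = x}} = 0 := by
        refine pr_eq_zero hP0 (fun ω h => ?_ : _ ⊆ (∅ : Set Ω)) (by simp [pr])
        exact absurd (by rw [← h.2.1, ← hsel ω, h.1]) hw
      rw [e1, e2, zero_mul]
  -- abbreviations
  set Q : Fin 2 → 𝒳 → ℝ := fun a x => pr P {ω | Ys t ω = a ∧ X ω = x} with hQ_def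
  set R : Fin 2 → 𝒳 → ℝ := fun y x => pr P {ω | Yp t ω = y ∧ X ω = x} with hR_def
  -- measurement error identities
  have hB10 : ∀ x, pr P {ω | Yp t ω = 1 ∧ Ys t ω = 0 ∧ X ω = x} = α t * Q 0 x := by
    intro x
    by_cases hq : pr P {ω | Ys t ω = 0 ∧ X ω = x} = 0
    · rw [pr_eq_zero hP0 (fun ω h => h.2 : _ ⊆ {ω | Ys t ω = 0 ∧ X ω = x}) hq,
        hQ_def]
      simp [hq]
    · have hq' : 0 < pr P {ω | Ys t ω = 0 ∧ X ω = x} :=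
        lt_of_le_of_ne (pr_nonneg hP0 _) (Ne.symm hq)
      have hx' : 0 < pr P {ω | X ω = x} :=
        lt_of_lt_of_le hq' (pr_mono hP0 fun ω h => h.2)
      have key := (hme t x hx').1 hq'
      unfold cpr at key
      rw [div_eq_iff hq] at key
      calc pr P {ω | Yp t ω = 1 ∧ Ys t ω = 0 ∧ X ω = x}
          = pr P ({ω | Yp t ω = 1} ∩ {ω | Ys t ω = 0 ∧ X ω = x}) :=
            pr_congr P fun ω => by simp [Set.mem_setOf_eq]
        _ = α t * pr P {ω | Ys t ω = 0 ∧ X ω = x} := by rw [key]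
        _ = α t * Q 0 x := rfl
  have hB01 : ∀ x, pr P {ω | Yp t ω = 0 ∧ Ys t ω = 1 ∧ X ω = x} = β t * Q 1 x := by
    intro x
    by_cases hq : pr P {ω | Ys t ω = 1 ∧ X ω = x} = 0
    · rw [pr_eq_zero hP0 (fun ω h => h.2 : _ ⊆ {ω | Ys t ω = 1 ∧ X ω = x}) hq,
        hQ_def]
      simp [hq]
    · have hq' : 0 < pr P {ω | Ys t ω = 1 ∧ X ω = x} :=
        lt_of_le_of_ne (pr_nonneg hP0 _) (Ne.symm hq)
      have hx' : 0 < pr P {ω | X ω = x} :=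
        lt_of_lt_of_le hq' (pr_mono hP0 fun ω h => h.2)
      have key := (hme t x hx').2 hq'
      unfold cpr at key
      rw [div_eq_iff hq] at key
      calc pr P {ω | Yp t ω = 0 ∧ Ys t ω = 1 ∧ X ω = x}
          = pr P ({ω | Yp t ω = 0} ∩ {ω | Ys t ω = 1 ∧ X ω = x}) :=
            pr_congr P fun ω => by simp [Set.mem_setOf_eq]
        _ = β t * pr P {ω | Ys t ω = 1 ∧ X ω = x} := by rw [key]
        _ = β t * Q 1 x := rfl
  -- splitting Q over Yp t values
  have hsplitQ : ∀ (a : Fin 2) (x : 𝒳),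
      Q a x = pr P {ω | Yp t ω = 0 ∧ Ys t ω = a ∧ X ω = x}
            + pr P {ω | Yp t ω = 1 ∧ Ys t ω = a ∧ X ω = x} := by
    intro a x
    rw [hQ_def]
    simp only
    rw [pr_fiber P (Yp t) {ω | Ys t ω = a ∧ X ω = x}, Fin.sum_univ_two]
    rfl
  -- splitting R over Ys t values
  have hsplitR : ∀ (y : Fin 2) (x : 𝒳),
      R y x = pr P {ω | Yp t ω = y ∧ Ys t ω = 0 ∧ X ω = x}
            + pr P {ω | Yp t ω = y ∧ Ys t ω = 1 ∧ X ω = x} := by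
    intro y x
    rw [hR_def]
    simp only
    rw [pr_fiber P (Ys t) {ω | Yp t ω = y ∧ X ω = x}, Fin.sum_univ_two]
    congr 1 <;> exact pr_congr P fun ω => by simp [Set.mem_setOf_eq]; tauto
  have hR1 : ∀ x, R 1 x = α t * Q 0 x + (Q 1 x - β t * Q 1 x) := by
    intro x
    rw [hsplitR 1 x, hB10 x]
    have := hsplitQ 1 x
    rw [hB01 x] at this
    linarith
  have hR0 : ∀ x, R 0 x = (Q 0 x - α t * Q 0 x) + β t * Q 1 x := by
    intro x
    rw [hsplitR 0 x, hB01 x]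
    have := hsplitQ 0 x
    rw [hB10 x] at this
    linarith
  -- denominator nonzero for surrogate loss
  have hD : (1 : ℝ) - β t - α t ≠ 0 := by
    have := hαβ t; intro h; linarith
  -- per-x algebraic identity
  have hx_alg : ∀ x : 𝒳,
      surrogateLoss (α t) (β t) ℓ (f x) 0 * R 0 x + surrogateLoss (α t) (β t) ℓ (f x) 1 * R 1 x
        = ℓ (f x) 0 * Q 0 x + ℓ (f x) 1 * Q 1 x := by
    intro x
    rw [hR0 x, hR1 x]
    simp only [surrogateLoss, if_true, show (0 : Fin 2) ≠ 1 by decide, if_false,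
      reduceIte]
    field_simp
    ring
  -- rewrite the RHS expectation
  have hRHS : ex P (fun ω => ℓ (f (X ω)) (Ys t ω))
      = ∑ x : 𝒳, (ℓ (f x) 0 * Q 0 x + ℓ (f x) 1 * Q 1 x) := by
    have := sum_fiber P (fun ω => (X ω, Ys t ω)) (fun p => ℓ (f p.1) p.2) Set.univ
    simp only [Set.mem_univ, if_true, and_true] at this
    rw [ex, ← this, Fintype.sum_prod_type]
    refine Finset.sum_congr rfl fun x _ => ?_
    rw [Fin.sum_univ_two]
    congr 1 <;>
    · congr 1
      refine pr_congr P fun ω => ?_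
      simp only [Set.mem_setOf_eq, Prod.ext_iff]
      tauto
  -- rewrite the LHS numerator
  have hnum : exIf P (fun ω => surrogateLoss (α t) (β t) ℓ (f (X ω)) (Y ω)) {ω | T ω = t}
      = pr P {ω | T ω = t} * ∑ x : 𝒳, (ℓ (f x) 0 * Q 0 x + ℓ (f x) 1 * Q 1 x) := by
    have step1 : exIf P (fun ω => surrogateLoss (α t) (β t) ℓ (f (X ω)) (Y ω)) {ω | T ω = t}
        = exIf P (fun ω => surrogateLoss (α t) (β t) ℓ (f (X ω)) (Yp t ω)) {ω | T ω = t} := by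
      unfold exIf
      refine Finset.sum_congr rfl fun ω _ => ?_
      by_cases h : T ω = t
      · have hm : ω ∈ {ω | T ω = t} := h
        rw [if_pos hm, if_pos hm]
        simp only [hcons ω, h]
      · have hm : ω ∉ {ω | T ω = t} := h
        rw [if_neg hm, if_neg hm]
    have hsf : exIf P (fun ω => surrogateLoss (α t) (β t) ℓ (f (X ω)) (Yp t ω)) {ω | T ω = t}
        = ∑ p : 𝒳 × Fin 2, surrogateLoss (α t) (β t) ℓ (f p.1) p.2
            * pr P {ω | (X ω, Yp t ω) = p ∧ ω ∈ {ω | T ω = t}} :=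
      (sum_fiber P (fun ω => (X ω, Yp t ω))
        (fun p => surrogateLoss (α t) (β t) ℓ (f p.1) p.2) {ω | T ω = t}).symm
    rw [step1, hsf, Fintype.sum_prod_type]
    dsimp only
    rw [Finset.mul_sum]
    refine Finset.sum_congr rfl fun x _ => ?_
    rw [Fin.sum_univ_two]
    have key : ∀ y : Fin 2,
        pr P {ω | (X ω, Yp t ω) = (x, y) ∧ ω ∈ {ω | T ω = t}} = R y x * pr P {ω | T ω = t} := by
      intro y
      calc pr P {ω | (X ω, Yp t ω) = (x, y) ∧ ω ∈ {ω | T ω = t}}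
          = pr P {ω | Yp t ω = y ∧ X ω = x ∧ T ω = t} := by
            refine pr_congr P fun ω => ?_
            simp only [Set.mem_setOf_eq, Prod.ext_iff]
            tauto
        _ = R y x * pr P {ω | T ω = t} := hA x y
    rw [key 0, key 1]
    linear_combination pr P {ω | T ω = t} * hx_alg x
  -- conclude
  have final : cex P (fun ω => surrogateLoss (α t) (β t) ℓ (f (X ω)) (Y ω)) {ω | T ω = t}
      = exIf P (fun ω => surrogateLoss (α t) (β t) ℓ (f (X ω)) (Y ω)) {ω | T ω = t}
        / pr P {ω | T ω = t} := rfl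
  rw [final, hnum, hRHS, mul_comm, mul_div_assoc, div_self hTtne, mul_one]
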